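/- arXiv:1705.02253 — 2 statements merged into one kernel-verified Lean document; each statement's English description precedes it below -/
import Mathlib

section
/- The measure μ is semilocally doubling on X if and only if its zero extension is semilocally doubling on the completion X̂. -/
open Metric MeasureTheory Set Filter UniformSpace
open scoped ENNReal NNReal Topology

noncomputable section

namespace Paper

universe u

/-- A nonconstant compact rectifiable curve in `X`, parameterized by arc length,
regarded as a `1`-Lipschitz map on `[0, len]`. -/
structure Curve (X : Type u) [MetricSpace X] where
  len : ℝ
  len_pos : 0 < len
  toFun : ℝ → X
  lip : LipschitzOnWith 1 toFun (Set.Icc 0 len)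
  nonconst : ∃ t ∈ Set.Icc (0 : ℝ) len, toFun t ≠ toFun 0

variable {X : Type u} [MetricSpace X]

/-- The line integral `∫_γ g ds` of a nonnegative function along a curve. -/
def Curve.lineIntegral (γ : Curve X) (g : X → ℝ≥0∞) : ℝ≥0∞ :=
  ∫⁻ t in Set.Icc (0 : ℝ) γ.len, g (γ.toFun t)

/-- The curve `γ` lies in the set `E`. -/
def Curve.In (γ : Curve X) (E : Set X) : Prop :=
  ∀ t ∈ Set.Icc (0 : ℝ) γ.len, γ.toFun t ∈ E

/-- The upper gradient inequality along the curve `γ`; the left-hand side is `∞`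
whenever one of the endpoint values is `±∞`. -/
def ugIneq (f : X → EReal) (g : X → ℝ≥0∞) (γ : Curve X) : Prop :=
  (f (γ.toFun 0) - f (γ.toFun γ.len)).abs ≤ γ.lineIntegral g

variable [MeasurableSpace X]

/-- `g` is an upper gradient of `f` on `E` (with `E` regarded as a metric space
in its own right). -/
def IsUpperGradOn (f : X → EReal) (g : X → ℝ≥0∞) (E : Set X) : Prop :=
  Measurable (fun x : E => g x) ∧ ∀ γ : Curve X, γ.In E → ugIneq f g γ

/-- The curve family `Γ` has zero `p`-modulus with respect to `μ`. -/
def ZeroMod (μ : Measure X) (p : ℝ) (Γ : Set (Curve X)) : Prop :=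
  ∃ ρ : X → ℝ≥0∞, Measurable ρ ∧ (∫⁻ x, ρ x ^ p ∂μ) < ∞ ∧
    ∀ γ ∈ Γ, γ.lineIntegral ρ = ∞

/-- `g` is a `p`-weak upper gradient of `f` on `E`. -/
def IsWeakUpperGradOn (μ : Measure X) (p : ℝ) (f : X → EReal) (g : X → ℝ≥0∞)
    (E : Set X) : Prop :=
  Measurable (fun x : E => g x) ∧
    ZeroMod (μ.restrict E) p {γ : Curve X | γ.In E ∧ ¬ ugIneq f g γ}

/-- `g` is a (the a.e.-unique) minimal `p`-weak upper gradient of `f` on `E`: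
a locally `L^p` `p`-weak upper gradient of `f` which is a.e. smaller than every
locally `L^p` `p`-weak upper gradient of `f` on `E`. -/
def IsMinimalWUG (μ : Measure X) (p : ℝ) (E : Set X) (f : X → EReal)
    (g : X → ℝ≥0∞) : Prop :=
  IsWeakUpperGradOn μ p f g E ∧
  (∀ x ∈ E, ∃ r > 0, (∫⁻ y in Metric.ball x r ∩ E, g y ^ p ∂μ) < ∞) ∧
  ∀ h : X → ℝ≥0∞, IsWeakUpperGradOn μ p f h E →
    (∀ x ∈ E, ∃ r > 0, (∫⁻ y in Metric.ball x r ∩ E, h y ^ p ∂μ) < ∞) →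
    ∀ᵐ x ∂(μ.restrict E), g x ≤ h x

/-- `f ∈ D^p(E)`: `f` is measurable on `E` and has an upper gradient in `L^p(E)`. -/
def MemDp (μ : Measure X) (p : ℝ) (E : Set X) (f : X → EReal) : Prop :=
  Measurable (fun x : E => f x) ∧
    ∃ g : X → ℝ≥0∞, IsUpperGradOn f g E ∧ (∫⁻ x in E, g x ^ p ∂μ) < ∞

/-- `f ∈ N^{1,p}(E)`. -/
def MemNp (μ : Measure X) (p : ℝ) (E : Set X) (f : X → EReal) : Prop :=
  Measurable (fun x : E => f x) ∧ (∫⁻ x in E, (f x).abs ^ p ∂μ) < ∞ ∧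
    ∃ g : X → ℝ≥0∞, IsUpperGradOn f g E ∧ (∫⁻ x in E, g x ^ p ∂μ) < ∞

/-- `f ∈ N^{1,p}_loc(E)`. -/
def MemNpLoc (μ : Measure X) (p : ℝ) (E : Set X) (f : X → EReal) : Prop :=
  ∀ x ∈ E, ∃ r > 0, MemNp μ p (Metric.ball x r ∩ E) f

/-- `f ∈ D^p_loc(E)`. -/
def MemDpLoc (μ : Measure X) (p : ℝ) (E : Set X) (f : X → EReal) : Prop :=
  ∀ x ∈ E, ∃ r > 0, MemDp μ p (Metric.ball x r ∩ E) f

/-- The `p`-energy `‖f‖_{N^{1,p}(E)}^p`. -/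
def npEnergy (μ : Measure X) (p : ℝ) (E : Set X) (f : X → EReal) : ℝ≥0∞ :=
  (∫⁻ x in E, (f x).abs ^ p ∂μ) +
    ⨅ (g : X → ℝ≥0∞) (_ : IsUpperGradOn f g E), ∫⁻ x in E, g x ^ p ∂μ

/-- The Sobolev capacity `C_p^X(E)`. -/
def capacity (μ : Measure X) (p : ℝ) (E : Set X) : ℝ≥0∞ :=
  ⨅ (f : X → EReal) (_ : MemNp μ p Set.univ f) (_ : ∀ x ∈ E, f x = 1),
    npEnergy μ p Set.univ f

/-- Standing assumption: `0 < μ(B) < ∞` for all balls `B`. -/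
def BallCond (μ : Measure X) : Prop :=
  ∀ (x : X) (r : ℝ), 0 < r → 0 < μ (Metric.ball x r) ∧ μ (Metric.ball x r) < ∞

/-- `μ` is doubling within `B(x₀, r₀)`, with doubling constant `C₀`. -/
def DoublingWithin (μ : Measure X) (C₀ : ℝ≥0) (x₀ : X) (r₀ : ℝ) : Prop :=
  ∀ (x : X) (r : ℝ), 0 < r → Metric.ball x r ⊆ Metric.ball x₀ r₀ →
    μ (Metric.ball x (2 * r)) ≤ (C₀ : ℝ≥0∞) * μ (Metric.ball x r)

/-- `μ` is locally doubling. -/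
def LocallyDoubling (μ : Measure X) : Prop :=
  ∀ x : X, ∃ r > 0, ∃ C₀ : ℝ≥0, DoublingWithin μ C₀ x r

/-- `μ` is semilocally doubling. -/
def SemilocallyDoubling (μ : Measure X) : Prop :=
  ∀ (x : X) (r : ℝ), 0 < r → ∃ C₀ : ℝ≥0, DoublingWithin μ C₀ x r

/-- `μ` is globally doubling, with doubling constant `C₀`. -/
def GloballyDoubling (μ : Measure X) (C₀ : ℝ≥0) : Prop :=
  ∀ (x : X) (r : ℝ), 0 < r → DoublingWithin μ C₀ x r

/-- Integral average of a nonnegative function over a set. -/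
def avg (μ : Measure X) (s : Set X) (h : X → ℝ≥0∞) : ℝ≥0∞ :=
  (∫⁻ x in s, h x ∂μ) / μ s

/-- Integral average of a real-valued function over a set. -/
def ravg (μ : Measure X) (s : Set X) (u : X → ℝ) : ℝ := ⨍ x in s, u x ∂μ

/-- The `(q,p)`-Poincaré inequality holds within `B(x₀, r₀)`, with constants
`C` and dilation `lam`. -/
def PoincareWithin (μ : Measure X) (q p C lam : ℝ) (x₀ : X) (r₀ : ℝ) : Prop :=
  ∀ (x : X) (r : ℝ), 0 < r → Metric.ball x r ⊆ Metric.ball x₀ r₀ →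
    ∀ (u : X → ℝ) (g : X → ℝ≥0∞),
      IntegrableOn u (Metric.ball x (lam * r)) μ →
      IsUpperGradOn (fun y => (u y : EReal)) g (Metric.ball x (lam * r)) →
      (avg μ (Metric.ball x r)
          fun y => ENNReal.ofReal |u y - ravg μ (Metric.ball x r) u| ^ q) ^ (1 / q)
        ≤ ENNReal.ofReal (C * r) *
            (avg μ (Metric.ball x (lam * r)) fun y => g y ^ p) ^ (1 / p)

/-- `X` supports a local `(q,p)`-Poincaré inequality. -/
def LocalPoincare (μ : Measure X) (q p : ℝ) : Prop :=
  ∀ x : X, ∃ r > 0, ∃ C > 0, ∃ lam ≥ (1 : ℝ), PoincareWithin μ q p C lam x r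

/-- `X` supports a semilocal `(q,p)`-Poincaré inequality. -/
def SemilocalPoincare (μ : Measure X) (q p : ℝ) : Prop :=
  ∀ (x : X) (r : ℝ), 0 < r → ∃ C > 0, ∃ lam ≥ (1 : ℝ), PoincareWithin μ q p C lam x r

/-- `X` supports a global `(q,p)`-Poincaré inequality with constants `C`, `lam`. -/
def GlobalPoincare (μ : Measure X) (q p C lam : ℝ) : Prop :=
  ∀ (x : X) (r : ℝ), 0 < r → PoincareWithin μ q p C lam x r

/-- `G` is `p`-path open: for `p`-a.e. curve `γ`, the set `γ⁻¹(G)` is relatively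
open in `[0, l_γ]`. -/
def PPathOpen (μ : Measure X) (p : ℝ) (G : Set X) : Prop :=
  ZeroMod μ p {γ : Curve X | ¬ ∃ U : Set ℝ, IsOpen U ∧
    γ.toFun ⁻¹' G ∩ Set.Icc 0 γ.len = U ∩ Set.Icc 0 γ.len}

/-- `G` is `p`-path almost open: for `p`-a.e. curve `γ`, the set `γ⁻¹(G)` is the
union of a relatively open subset of `[0, l_γ]` and a set of `1`-dimensional
Hausdorff (i.e. Lebesgue) measure zero. -/
def PPathAlmostOpen (μ : Measure X) (p : ℝ) (G : Set X) : Prop :=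
  ZeroMod μ p {γ : Curve X | ¬ ∃ U Z : Set ℝ, IsOpen U ∧ volume Z = 0 ∧
    Z ⊆ Set.Icc 0 γ.len ∧
    γ.toFun ⁻¹' G ∩ Set.Icc 0 γ.len = (U ∩ Set.Icc 0 γ.len) ∪ Z}

/-- `x` is an `L^p`-Lebesgue point of `u`. -/
def LebPoint (μ : Measure X) (p : ℝ) (u : X → EReal) (x : X) : Prop :=
  Tendsto (fun r : ℝ => avg μ (Metric.ball x r) fun y => ((u y - u x).abs) ^ p)
    (𝓝[>] (0 : ℝ)) (𝓝 0)

/-- `u` is quasicontinuous on `X`. -/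
def Quasicontinuous (μ : Measure X) (p : ℝ) (u : X → EReal) : Prop :=
  ∀ ε : ℝ≥0∞, 0 < ε → ∃ G : Set X, IsOpen G ∧ capacity μ p G < ε ∧
    (∀ x, x ∉ G → u x ≠ ⊤ ∧ u x ≠ ⊥) ∧ ContinuousOn u Gᶜ

/-- Positive distance between two sets (vacuously true if `E = ∅`). -/
def distPos (G E : Set X) : Prop :=
  ∃ δ : ℝ, 0 < δ ∧ ∀ x ∈ G, ∀ y ∈ E, δ ≤ dist x y

/-- The family `G_dist(Ω)` of bounded open `G ⊆ Ω` with `dist(G, X∖Ω) > 0`. -/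
def Gdist (Ω : Set X) : Set (Set X) :=
  {G | IsOpen G ∧ Bornology.IsBounded G ∧ G ⊆ Ω ∧ distPos G Ωᶜ}

/-- `φ ∈ N^{1,p}_0(G)` (extended by zero outside `G`). -/
def MemN0 (μ : Measure X) (p : ℝ) (G : Set X) (φ : X → EReal) : Prop :=
  MemNp μ p Set.univ φ ∧ ∀ x, x ∉ G → φ x = 0

/-- `φ ∈ N^{1,p}_{0,dist}(Ω)`: the closure in `N^{1,p}(X)` of the functions
vanishing outside some `G ∈ G_dist(Ω)`. -/
def MemN0dist (μ : Measure X) (p : ℝ) (Ω : Set X) (φ : X → EReal) : Prop :=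
  MemNp μ p Set.univ φ ∧
    ∀ ε : ℝ≥0∞, 0 < ε → ∃ ψ : X → EReal, (∃ G ∈ Gdist Ω, MemN0 μ p G ψ) ∧
      npEnergy μ p Set.univ (fun x => φ x - ψ x) < ε

/-- `u` is a `Q`-quasiminimizer in `Ω`, tested by `φ ∈ N^{1,p}_{0,dist}(Ω)`. -/
def QuasiMinimizerDist (μ : Measure X) (p Q : ℝ) (Ω : Set X) (u : X → EReal) : Prop :=
  ∀ φ : X → EReal, MemN0dist μ p Ω φ →
    ∀ gu gv : X → ℝ≥0∞, IsMinimalWUG μ p Ω u gu →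
      IsMinimalWUG μ p Ω (fun x => u x + φ x) gv →
      (∫⁻ x in {x ∈ Ω | φ x ≠ 0}, gu x ^ p ∂μ) ≤
        ENNReal.ofReal Q * ∫⁻ x in {x ∈ Ω | φ x ≠ 0}, gv x ^ p ∂μ

/-- `u` is a `Q`-quasisuperminimizer in `Ω`, tested by nonnegative
`φ ∈ N^{1,p}_{0,dist}(Ω)`. -/
def QuasiSuperminimizerDist (μ : Measure X) (p Q : ℝ) (Ω : Set X) (u : X → EReal) : Prop :=
  ∀ φ : X → EReal, MemN0dist μ p Ω φ → (∀ x, 0 ≤ φ x) →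
    ∀ gu gv : X → ℝ≥0∞, IsMinimalWUG μ p Ω u gu →
      IsMinimalWUG μ p Ω (fun x => u x + φ x) gv →
      (∫⁻ x in {x ∈ Ω | φ x ≠ 0}, gu x ^ p ∂μ) ≤
        ENNReal.ofReal Q * ∫⁻ x in {x ∈ Ω | φ x ≠ 0}, gv x ^ p ∂μ

/-- `ess liminf_{y → x} v(y)` (with respect to `μ`). -/
def essLiminfAt (μ : Measure X) (v : X → EReal) (x : X) : EReal :=
  ⨆ (r : ℝ) (_ : 0 < r), essInf v (μ.restrict (Metric.ball x r))

/-- `v` is lsc-regularized on `Ω`. -/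
def LscRegularizedOn (μ : Measure X) (v : X → EReal) (Ω : Set X) : Prop :=
  ∀ x ∈ Ω, v x = essLiminfAt (μ.restrict Ω) v x

/-- The nonnegative part of an extended real, as an element of `ℝ≥0∞`. -/
def erealPos (x : EReal) : ℝ≥0∞ := if x = ⊤ then ⊤ else ENNReal.ofReal x.toReal

/-- The integral average `⨍_S u dμ` of an `ℝ̄`-valued function. -/
def erealAvg (μ : Measure X) (S : Set X) (u : X → EReal) : EReal :=
  (((∫⁻ x in S, erealPos (u x) ∂μ) / μ S : ℝ≥0∞) : EReal) -
    (((∫⁻ x in S, erealPos (-(u x)) ∂μ) / μ S : ℝ≥0∞) : EReal)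

/-- `Ω^∧ = X̂ ∖ cl_{X̂}(X ∖ Ω)`, the largest open subset of the completion `X̂`
with `Ω^∧ ∩ X = Ω`. -/
def hatSet (Ω : Set X) : Set (Completion X) :=
  (closure (((↑) : X → Completion X) '' Ωᶜ))ᶜ

/-- The function `x ↦ limsup_{r → 0} ⨍_{B̂(x,r) ∩ X} u dμ` on the completion. -/
def hatLimsupExt (μ : Measure X) (u : X → EReal) : Completion X → EReal :=
  fun x => limsup
    (fun r : ℝ => erealAvg μ (((↑) : X → Completion X) ⁻¹' Metric.ball x r) u)
    (𝓝[>] (0 : ℝ))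


/-- The measure `μ` is semilocally doubling on `X` if and only if its
zero extension is semilocally doubling on the completion `X̂`. -/
theorem statement2 {X : Type u} [MetricSpace X] [MeasurableSpace X] [BorelSpace X]
    [MeasurableSpace (Completion X)] [BorelSpace (Completion X)]
    (μ : Measure X) (hμ : BallCond μ) :
    SemilocallyDoubling μ ↔
      SemilocallyDoubling (μ.map ((↑) : X → Completion X)) := by
  have hmeas : Measurable ((↑) : X → Completion X) := (Completion.continuous_coe X).measurable
  have hmap : ∀ (x : Completion X) (s : ℝ),
      (μ.map ((↑) : X → Completion X)) (Metric.ball x s)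
        = μ (((↑) : X → Completion X) ⁻¹' Metric.ball x s) := fun x s =>
    Measure.map_apply hmeas measurableSet_ball
  have hpre : ∀ (y : X) (s : ℝ),
      ((↑) : X → Completion X) ⁻¹' Metric.ball (↑y) s = Metric.ball y s := fun y s =>
    Completion.coe_isometry.preimage_ball y s
  constructor
  · -- forward direction
    intro hX xh R hR
    obtain ⟨x₀, hx₀⟩ := Metric.denseRange_iff.1 Completion.denseRange_coe xh R hR
    obtain ⟨C, hC⟩ := hX x₀ (2 * R) (by linarith)
    refine ⟨C, ?_⟩
    intro yh r hr hsub
    have key : ∀ t : ℝ, t < 2 * r →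
        μ (((↑) : X → Completion X) ⁻¹' Metric.ball yh t)
          ≤ (C : ℝ≥0∞) * μ (((↑) : X → Completion X) ⁻¹' Metric.ball yh r) := by
      intro t ht
      set δ : ℝ := min ((2 * r - t) / 4) (r / 4) with hδdef
      have hδpos : 0 < δ := lt_min (by linarith) (by linarith)
      have hδ1 : δ ≤ (2 * r - t) / 4 := min_le_left _ _
      have hδ2 : δ ≤ r / 4 := min_le_right _ _
      obtain ⟨z, hz⟩ := Metric.denseRange_iff.1 Completion.denseRange_coe yh δ hδpos
      have h1 : ((↑) : X → Completion X) ⁻¹' Metric.ball yh t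
          ⊆ Metric.ball z (2 * (r - δ)) := by
        intro w hw
        simp only [mem_preimage, Metric.mem_ball] at hw ⊢
        have htr : dist (↑w) (↑z : Completion X) ≤ dist (↑w : Completion X) yh + dist yh ↑z :=
          dist_triangle _ _ _
        rw [Completion.dist_eq] at htr
        linarith
      have h2 : Metric.ball z (r - δ) ⊆ ((↑) : X → Completion X) ⁻¹' Metric.ball yh r := by
        intro w hw
        simp only [mem_preimage, Metric.mem_ball] at hw ⊢
        have htr : dist (↑w : Completion X) yh ≤ dist (↑w : Completion X) ↑z + dist (↑z) yh :=
          dist_triangle _ _ _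
        rw [Completion.dist_eq, dist_comm (↑z : Completion X) yh] at htr
        linarith
      have h3 : Metric.ball z (r - δ) ⊆ Metric.ball x₀ (2 * R) := by
        intro w hw
        have hw2 : (↑w : Completion X) ∈ Metric.ball xh R := hsub (h2 hw)
        rw [Metric.mem_ball] at hw2 ⊢
        have htr : dist (↑w) (↑x₀ : Completion X) ≤ dist (↑w : Completion X) xh + dist xh ↑x₀ :=
          dist_triangle _ _ _
        rw [Completion.dist_eq] at htr
        linarith
      have hdb := hC z (r - δ) (by linarith) h3
      calc μ (((↑) : X → Completion X) ⁻¹' Metric.ball yh t)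
          ≤ μ (Metric.ball z (2 * (r - δ))) := measure_mono h1
        _ ≤ (C : ℝ≥0∞) * μ (Metric.ball z (r - δ)) := hdb
        _ ≤ (C : ℝ≥0∞) * μ (((↑) : X → Completion X) ⁻¹' Metric.ball yh r) :=
            mul_le_mul_right (measure_mono h2) _
    have hun : ((↑) : X → Completion X) ⁻¹' Metric.ball yh (2 * r)
        = ⋃ n : ℕ, ((↑) : X → Completion X) ⁻¹' Metric.ball yh (2 * r - r / (n + 1)) := by
      ext w
      simp only [mem_preimage, Metric.mem_ball, mem_iUnion]
      constructor
      · intro h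
        have hεpos : 0 < 2 * r - dist (↑w : Completion X) yh := by linarith
        obtain ⟨n, hn⟩ := exists_nat_gt (r / (2 * r - dist (↑w : Completion X) yh))
        refine ⟨n, ?_⟩
        have hn1 : r / (2 * r - dist (↑w : Completion X) yh) < (n : ℝ) + 1 := by linarith
        have hlt : r < ((n : ℝ) + 1) * (2 * r - dist (↑w : Completion X) yh) :=
          (div_lt_iff₀ hεpos).1 hn1
        have : r / ((n : ℝ) + 1) < 2 * r - dist (↑w : Completion X) yh := by
          rw [div_lt_iff₀ (by positivity)]
          nlinarith
        linarith
      · rintro ⟨n, hn⟩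
        have : (0 : ℝ) < r / ((n : ℝ) + 1) := by positivity
        linarith
    have hdir : Directed (· ⊆ ·)
        (fun n : ℕ => ((↑) : X → Completion X) ⁻¹' Metric.ball yh (2 * r - r / (n + 1))) := by
      apply Monotone.directed_le
      intro n m hnm
      apply preimage_mono
      apply Metric.ball_subset_ball
      have : r / ((m : ℝ) + 1) ≤ r / ((n : ℝ) + 1) := by
        apply div_le_div_of_nonneg_left hr.le (by positivity)
        exact_mod_cast Nat.succ_le_succ hnm
      linarith
    rw [hmap, hmap, hun, hdir.measure_iUnion]
    exact iSup_le fun n => key _ (by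
      have : (0 : ℝ) < r / ((n : ℝ) + 1) := by positivity
      linarith)
  · -- reverse direction
    intro hXh x₀ R hR
    obtain ⟨C, hC⟩ := hXh (↑x₀) (2 * R) (by linarith)
    refine ⟨C, ?_⟩
    intro y r hrpos hsub
    have hsub2 : Metric.ball (↑y : Completion X) r ⊆ Metric.ball (↑x₀ : Completion X) (2 * R) := by
      intro wh hwh
      rw [Metric.mem_ball] at hwh ⊢
      set ε : ℝ := min (r - dist wh (↑y : Completion X)) R with hεdef
      have hεpos : 0 < ε := lt_min (by linarith) hR
      have hε1 : ε ≤ r - dist wh (↑y : Completion X) := min_le_left _ _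
      have hε2 : ε ≤ R := min_le_right _ _
      obtain ⟨w, hw⟩ := Metric.denseRange_iff.1 Completion.denseRange_coe wh ε hεpos
      have hwy : dist w y < r := by
        rw [← Completion.dist_eq]
        have htr : dist (↑w : Completion X) ↑y ≤ dist (↑w : Completion X) wh + dist wh ↑y :=
          dist_triangle _ _ _
        rw [dist_comm (↑w : Completion X) wh] at htr
        linarith
      have hwx : dist w x₀ < R := hsub hwy
      have htr : dist wh (↑x₀ : Completion X) ≤ dist wh ↑w + dist (↑w : Completion X) ↑x₀ :=
        dist_triangle _ _ _
      rw [Completion.dist_eq] at htr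
      linarith
    have := hC (↑y) r hrpos hsub2
    rw [hmap, hmap, hpre, hpre] at this
    exact this

end Paper
end
end

section
/- If X supports a (q,p)-Poincaré inequality within the ball B(x₀,r₀), with constants C_PI and λ, then the completion X̂ supports a (q,p)-Poincaré inequality within the ball B̂(x₀,r₀), with the same constants C_PI and λ. -/
open Metric MeasureTheory Set Filter UniformSpace
open scoped ENNReal NNReal Topology

noncomputable section

namespace Paper

universe u

variable {X : Type u} [MetricSpace X]

variable [MeasurableSpace X]

/-!
Balls of `X̂` centred at points of `X` are, up to the null set `X̂ ∖ X`, balls of `X`, so the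
inequality transfers verbatim to them. A ball `B̂(x, r)` with arbitrary centre is exhausted by
the balls `B̂(xₙ, r - d(xₙ, x)) ⊆ B̂(x, r)` with centres `xₙ ∈ X` tending to `x`: by dominated
convergence their means converge to that of `B̂(x, r)`, so Fatou's lemma bounds the mean
oscillation over `B̂(x, r)` by the liminf of those over the small balls, while on the right-hand
side the dilated balls stay inside `λB̂(x, r)` and their measures converge to its measure.
-/

theorem _root_.DenseRange.exists_seq_tendsto {α β : Type*} [TopologicalSpace β]
    [FrechetUrysohnSpace β] {f : α → β} (hf : DenseRange f) (b : β) :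
    ∃ a : ℕ → α, Tendsto (f ∘ a) atTop (𝓝 b) := by
  obtain ⟨x, hx, hlim⟩ := mem_closure_iff_seq_limit.1 (hf b)
  choose a ha using hx
  exact ⟨a, by simpa only [Function.comp_def, ha] using hlim⟩

theorem eventually_mem_ball_of_tendsto {Y ι : Type*} [PseudoMetricSpace Y] {l : Filter ι}
    {c : ι → Y} {c₀ : Y} {ρ : ι → ℝ} {ρ₀ : ℝ} (hc : Tendsto c l (𝓝 c₀))
    (hρ : Tendsto ρ l (𝓝 ρ₀)) {y : Y} (hy : y ∈ Metric.ball c₀ ρ₀) :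
    ∀ᶠ i in l, y ∈ Metric.ball (c i) (ρ i) :=
  (tendsto_const_nhds.dist hc).eventually_lt hρ hy

section Averages

variable {α β : Type*} [MeasurableSpace α] [MeasurableSpace β]

def meanOscillation (μ : Measure α) (q : ℝ) (s : Set α) (u : α → ℝ) : ℝ≥0∞ :=
  avg μ s fun y => ENNReal.ofReal |u y - ravg μ s u| ^ q

theorem avg_map {μ : Measure α} {φ : α → β} (hφ : Measurable φ) {s : Set β}
    (hs : MeasurableSet s) {f : β → ℝ≥0∞} (hf : AEMeasurable f ((μ.map φ).restrict s)) :
    avg (μ.map φ) s f = avg μ (φ ⁻¹' s) (f ∘ φ) := by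
  rw [Measure.restrict_map hφ hs] at hf
  rw [avg, avg, Measure.restrict_map hφ hs, lintegral_map' hf hφ.aemeasurable,
    Measure.map_apply hφ hs]
  rfl

theorem ravg_map {μ : Measure α} {φ : α → β} (hφ : Measurable φ) {s : Set β}
    (hs : MeasurableSet s) {u : β → ℝ} (hu : AEStronglyMeasurable u ((μ.map φ).restrict s)) :
    ravg (μ.map φ) s u = ravg μ (φ ⁻¹' s) (u ∘ φ) := by
  rw [Measure.restrict_map hφ hs] at hu
  rw [ravg, ravg, Measure.restrict_map hφ hs, average_eq, average_eq,
    integral_map hφ.aemeasurable hu, measureReal_def, measureReal_def,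
    Measure.map_apply hφ MeasurableSet.univ, preimage_univ]
  rfl

theorem meanOscillation_map {μ : Measure α} {φ : α → β} (hφ : Measurable φ) {s : Set β}
    (hs : MeasurableSet s) (q : ℝ) {u : β → ℝ}
    (hu : AEStronglyMeasurable u ((μ.map φ).restrict s)) :
    meanOscillation (μ.map φ) q s u = meanOscillation μ q (φ ⁻¹' s) (u ∘ φ) := by
  rw [meanOscillation, meanOscillation, ravg_map hφ hs hu, avg_map hφ hs (by fun_prop)]
  rfl

end Averages

section Exhaustion

variable {α : Type*} [MeasurableSpace α] {μ : Measure α} {H : Set α} {B : ℕ → Set α}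

theorem tendsto_measure_of_subset_of_eventually_mem (hB : ∀ n, MeasurableSet (B n))
    (hH : MeasurableSet H) (hHfin : μ H ≠ ∞) (hBH : ∀ n, B n ⊆ H)
    (hlim : ∀ x ∈ H, ∀ᶠ n in atTop, x ∈ B n) :
    Tendsto (fun n => μ (B n)) atTop (𝓝 (μ H)) := by
  refine tendsto_measure_of_tendsto_indicator atTop hB hH hHfin (.of_forall hBH) fun x => ?_
  by_cases hx : x ∈ H
  · exact (hlim x hx).mono fun n hn => iff_of_true hn hx
  · exact .of_forall fun n => iff_of_false (fun h => hx (hBH n h)) hx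

theorem tendsto_setIntegral_of_subset_of_eventually_mem {u : α → ℝ} (hu : IntegrableOn u H μ)
    (hB : ∀ n, MeasurableSet (B n)) (hH : MeasurableSet H) (hBH : ∀ n, B n ⊆ H)
    (hlim : ∀ x ∈ H, ∀ᶠ n in atTop, x ∈ B n) :
    Tendsto (fun n => ∫ x in B n, u x ∂μ) atTop (𝓝 (∫ x in H, u x ∂μ)) := by
  have hind : ∀ n, ∫ x in B n, u x ∂μ = ∫ x in H, (B n).indicator u x ∂μ := fun n => by
    rw [setIntegral_indicator (hB n), inter_eq_self_of_subset_right (hBH n)]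
  simp_rw [hind]
  refine tendsto_integral_of_dominated_convergence (fun x => ‖u x‖)
    (fun n => hu.1.indicator (hB n)) hu.norm
    (fun n => ae_of_all _ fun x => norm_indicator_le_norm_self u x) ?_
  filter_upwards [ae_restrict_mem hH] with x hx
  exact tendsto_const_nhds.congr' ((hlim x hx).mono fun n hn => (indicator_of_mem hn u).symm)

theorem tendsto_ravg_of_subset_of_eventually_mem {u : α → ℝ} (hu : IntegrableOn u H μ)
    (hB : ∀ n, MeasurableSet (B n)) (hH : MeasurableSet H) (hHpos : μ H ≠ 0) (hHfin : μ H ≠ ∞)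
    (hBH : ∀ n, B n ⊆ H) (hlim : ∀ x ∈ H, ∀ᶠ n in atTop, x ∈ B n) :
    Tendsto (fun n => ravg μ (B n) u) atTop (𝓝 (ravg μ H u)) := by
  have hμB := (ENNReal.tendsto_toReal hHfin).comp
    (tendsto_measure_of_subset_of_eventually_mem hB hH hHfin hBH hlim)
  simp only [ravg, setAverage_eq, smul_eq_mul, measureReal_def]
  exact (hμB.inv₀ (ENNReal.toReal_pos hHpos hHfin).ne').mul
    (tendsto_setIntegral_of_subset_of_eventually_mem hu hB hH hBH hlim)

theorem meanOscillation_le_liminf (q : ℝ) {u : α → ℝ} (hu : IntegrableOn u H μ)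
    (hB : ∀ n, MeasurableSet (B n)) (hH : MeasurableSet H) (hHpos : μ H ≠ 0) (hHfin : μ H ≠ ∞)
    (hBH : ∀ n, B n ⊆ H) (hlim : ∀ x ∈ H, ∀ᶠ n in atTop, x ∈ B n) :
    meanOscillation μ q H u ≤ liminf (fun n => meanOscillation μ q (B n) u) atTop := by
  set F : ℕ → α → ℝ≥0∞ :=
    fun n => (B n).indicator fun y => ENNReal.ofReal |u y - ravg μ (B n) u| ^ q
  have hF : ∀ n, AEMeasurable (F n) (μ.restrict H) := fun n =>
    (by fun_prop : Measurable fun z : ℝ => ENNReal.ofReal |z - ravg μ (B n) u| ^ q)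
      |>.comp_aemeasurable hu.1.aemeasurable |>.indicator (hB n)
  have hFlim : ∀ x ∈ H, Tendsto (fun n => F n x) atTop
      (𝓝 (ENNReal.ofReal |u x - ravg μ H u| ^ q)) := fun x hx => by
    have hravg := tendsto_ravg_of_subset_of_eventually_mem hu hB hH hHpos hHfin hBH hlim
    have hcont : Continuous fun c : ℝ => ENNReal.ofReal |u x - c| ^ q :=
      ENNReal.continuous_rpow_const.comp
        (ENNReal.continuous_ofReal.comp (continuous_const.sub continuous_id).abs)
    refine (hcont.tendsto _ |>.comp hravg).congr' ?_
    exact (hlim x hx).mono fun n hn => by simp only [F, Function.comp_apply, indicator_of_mem hn]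
  have hFint : ∀ n, ∫⁻ x in H, F n x ∂μ =
      ∫⁻ x in B n, ENNReal.ofReal |u x - ravg μ (B n) u| ^ q ∂μ := fun n => by
    rw [lintegral_indicator (hB n), Measure.restrict_restrict (hB n),
      inter_eq_self_of_subset_left (hBH n)]
  simp only [meanOscillation, avg, ENNReal.div_eq_inv_mul]
  calc (μ H)⁻¹ * ∫⁻ x in H, ENNReal.ofReal |u x - ravg μ H u| ^ q ∂μ
      = (μ H)⁻¹ * ∫⁻ x in H, liminf (fun n => F n x) atTop ∂μ := by
        rw [setLIntegral_congr_fun hH fun x hx => (hFlim x hx).liminf_eq.symm]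
    _ ≤ (μ H)⁻¹ * liminf (fun n => ∫⁻ x in H, F n x ∂μ) atTop := by
        gcongr; exact lintegral_liminf_le' hF
    _ = liminf (fun n => (μ H)⁻¹ * ∫⁻ x in H, F n x ∂μ) atTop :=
        (ENNReal.liminf_const_mul_of_ne_top (ENNReal.inv_ne_top.2 hHpos)).symm
    _ ≤ _ := liminf_le_liminf (.of_forall fun n => by
        rw [hFint]; gcongr; exact hBH n)

end Exhaustion

section UpperGradients

variable {Y : Type*} [MetricSpace Y] {φ : X → Y}

def Curve.mapIsometry (γ : Curve X) (hφ : Isometry φ) : Curve Y where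
  len := γ.len
  len_pos := γ.len_pos
  toFun := φ ∘ γ.toFun
  lip := by simpa using hφ.lipschitz.comp_lipschitzOnWith γ.lip
  nonconst := let ⟨t, ht, hne⟩ := γ.nonconst; ⟨t, ht, hφ.injective.ne hne⟩

theorem IsUpperGradOn.mono {f : X → EReal} {g : X → ℝ≥0∞} {E F : Set X}
    (hg : IsUpperGradOn f g E) (hFE : F ⊆ E) : IsUpperGradOn f g F :=
  ⟨hg.1.comp (measurable_inclusion hFE), fun γ hγ => hg.2 γ fun t ht => hFE (hγ t ht)⟩

theorem IsUpperGradOn.comp_isometry [MeasurableSpace Y] {f : Y → EReal} {g : Y → ℝ≥0∞}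
    {E : Set Y} (hg : IsUpperGradOn f g E) (hφ : Isometry φ) (hφm : Measurable φ) :
    IsUpperGradOn (f ∘ φ) (g ∘ φ) (φ ⁻¹' E) := by
  have hres : Measurable fun x : φ ⁻¹' E => (⟨φ x, x.2⟩ : E) :=
    (hφm.comp measurable_subtype_coe).subtype_mk
  exact ⟨hg.1.comp hres, fun γ hγ => hg.2 (γ.mapIsometry hφ) hγ⟩

end UpperGradients

theorem BallCond.map_isometry_of_denseRange {Y : Type*} [MetricSpace Y] [MeasurableSpace Y]
    [BorelSpace Y]
    {μ : Measure X} (hμ : BallCond μ) {φ : X → Y} (hφ : Isometry φ) (hφm : Measurable φ)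
    (hd : DenseRange φ) : BallCond (μ.map φ) := by
  intro z ρ hρ
  obtain ⟨x, hx⟩ := hd.exists_dist_lt z (half_pos hρ)
  rw [dist_comm] at hx
  rw [Measure.map_apply hφm measurableSet_ball]
  have hin : Metric.ball x (ρ / 2) ⊆ φ ⁻¹' Metric.ball z ρ := by
    rw [← hφ.preimage_ball]; exact preimage_mono (ball_subset_ball' (by linarith))
  have hout : φ ⁻¹' Metric.ball z ρ ⊆ Metric.ball x (2 * ρ) := by
    rw [← hφ.preimage_ball]
    exact preimage_mono (ball_subset_ball' (by rw [dist_comm]; linarith))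
  exact ⟨(hμ x _ (half_pos hρ)).1.trans_le (measure_mono hin),
    (measure_mono hout).trans_lt (hμ x _ (by linarith)).2⟩

def PoincareAt (μ : Measure X) (q p C lam : ℝ) (x : X) (r : ℝ) : Prop :=
  ∀ (u : X → ℝ) (g : X → ℝ≥0∞),
    IntegrableOn u (Metric.ball x (lam * r)) μ →
    IsUpperGradOn (fun y => (u y : EReal)) g (Metric.ball x (lam * r)) →
    meanOscillation μ q (Metric.ball x r) u ^ (1 / q) ≤
      ENNReal.ofReal (C * r) * (avg μ (Metric.ball x (lam * r)) fun y => g y ^ p) ^ (1 / p)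

theorem PoincareAt.map_isometry {Y : Type*} [MetricSpace Y] [MeasurableSpace Y] [BorelSpace Y]
    {μ : Measure X} {φ : X → Y} (hφ : Isometry φ) (hφm : Measurable φ) {q p C lam : ℝ}
    (hlam : 1 ≤ lam) {x : X} {r : ℝ} (hr : 0 < r) (hPI : PoincareAt μ q p C lam x r) :
    PoincareAt (μ.map φ) q p C lam (φ x) r := by
  intro u g hu hg
  have huφ : IntegrableOn (u ∘ φ) (Metric.ball x (lam * r)) μ := by
    rw [IntegrableOn, Measure.restrict_map hφm measurableSet_ball] at hu
    rw [← hφ.preimage_ball]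
    exact hu.comp_measurable hφm
  have hgφ := hg.comp_isometry hφ hφm
  rw [hφ.preimage_ball] at hgφ
  have hgp : AEMeasurable (fun y => g y ^ p) ((μ.map φ).restrict (Metric.ball (φ x) (lam * r))) :=
    (aemeasurable_restrict_of_measurable_subtype measurableSet_ball hg.1).pow_const p
  have hsub : Metric.ball (φ x) r ⊆ Metric.ball (φ x) (lam * r) :=
    ball_subset_ball (le_mul_of_one_le_left hr.le hlam)
  rw [meanOscillation_map hφm measurableSet_ball q (hu.1.mono_set hsub),
    avg_map hφm measurableSet_ball hgp, hφ.preimage_ball, hφ.preimage_ball]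
  exact hPI (u ∘ φ) (g ∘ φ) huφ hgφ

theorem tendsto_ofReal_mul_div_rpow {ι : Type*} {l : Filter ι} {C r : ℝ} (hCr : 0 < C * r)
    {I : ℝ≥0∞} (hI : I ≠ ∞) (p : ℝ) {s : ι → ℝ} {m : ι → ℝ≥0∞} {m₀ : ℝ≥0∞}
    (hs : Tendsto s l (𝓝 r)) (hm : Tendsto m l (𝓝 m₀)) :
    Tendsto (fun i => ENNReal.ofReal (C * s i) * (I / m i) ^ (1 / p)) l
      (𝓝 (ENNReal.ofReal (C * r) * (I / m₀) ^ (1 / p))) :=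
  ENNReal.Tendsto.mul ((ENNReal.continuous_ofReal.tendsto _).comp (hs.const_mul C))
    (.inl (ENNReal.ofReal_pos.2 hCr).ne')
    ((ENNReal.continuous_rpow_const.tendsto _).comp (ENNReal.Tendsto.const_div hm (.inr hI)))
    (.inr ENNReal.ofReal_ne_top)

theorem poincareAt_of_tendsto [BorelSpace X] {ν : Measure X} (hν : BallCond ν)
    {q p C lam : ℝ} (hq : 0 < q) (hp : 0 < p) (hC : 0 < C) (hlam : 1 ≤ lam) {c : X} {r : ℝ}
    (hr : 0 < r) {cs : ℕ → X} (hcs : Tendsto cs atTop (𝓝 c))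
    (hPI : ∀ᶠ n in atTop, PoincareAt ν q p C lam (cs n) (r - dist (cs n) c)) :
    PoincareAt ν q p C lam c r := by
  intro u g hu hg
  set s : ℕ → ℝ := fun n => r - dist (cs n) c
  set I : ℝ≥0∞ := ∫⁻ y in Metric.ball c (lam * r), g y ^ p ∂ν
  have hs : Tendsto s atTop (𝓝 r) := by
    simpa [s] using (tendsto_const_nhds (x := r)).sub (hcs.dist (tendsto_const_nhds (x := c)))
  have hB : ∀ n, Metric.ball (cs n) (s n) ⊆ Metric.ball c r :=
    fun n => ball_subset_ball' (by simp [s])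
  have hLB : ∀ n, Metric.ball (cs n) (lam * s n) ⊆ Metric.ball c (lam * r) :=
    fun n => ball_subset_ball' (by nlinarith [dist_nonneg (x := cs n) (y := c)])
  have hlamr : 0 < lam * r := by positivity
  have hμLB : Tendsto (fun n => ν (Metric.ball (cs n) (lam * s n))) atTop
      (𝓝 (ν (Metric.ball c (lam * r)))) :=
    tendsto_measure_of_subset_of_eventually_mem (fun _ => measurableSet_ball) measurableSet_ball
      (hν c _ hlamr).2.ne hLB fun y hy => eventually_mem_ball_of_tendsto hcs (hs.const_mul lam) hy
  have hbound : ∀ᶠ n in atTop, meanOscillation ν q (Metric.ball (cs n) (s n)) u ≤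
      (ENNReal.ofReal (C * s n) * (I / ν (Metric.ball (cs n) (lam * s n))) ^ (1 / p)) ^ q := by
    filter_upwards [hPI] with n hn
    rw [← ENNReal.rpow_inv_le_iff hq, ← one_div]
    refine (hn u g (hu.mono_set (hLB n)) (hg.mono (hLB n))).trans ?_
    gcongr
    exact ENNReal.div_le_div_right (lintegral_mono_set (hLB n)) _
  rw [one_div, ENNReal.rpow_inv_le_iff hq]
  change _ ≤ (ENNReal.ofReal (C * r) * (I / ν (Metric.ball c (lam * r))) ^ (1 / p)) ^ q
  rcases eq_or_ne I ⊤ with hI | hI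
  · rw [hI, ENNReal.top_div_of_ne_top (hν c _ hlamr).2.ne, ENNReal.top_rpow_of_pos (by positivity),
      ENNReal.mul_top (ENNReal.ofReal_pos.2 (mul_pos hC hr)).ne', ENNReal.top_rpow_of_pos hq]
    exact le_top
  have hlim := tendsto_ofReal_mul_div_rpow (mul_pos hC hr) hI p hs hμLB
  calc meanOscillation ν q (Metric.ball c r) u
      ≤ liminf (fun n => meanOscillation ν q (Metric.ball (cs n) (s n)) u) atTop :=
        meanOscillation_le_liminf q (hu.mono_set (ball_subset_ball (le_mul_of_one_le_left
          hr.le hlam))) (fun _ => measurableSet_ball) measurableSet_ball (hν c r hr).1.ne'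
          (hν c r hr).2.ne hB fun y hy => eventually_mem_ball_of_tendsto hcs hs hy
    _ ≤ liminf (fun n => (ENNReal.ofReal (C * s n) *
          (I / ν (Metric.ball (cs n) (lam * s n))) ^ (1 / p)) ^ q) atTop :=
        liminf_le_liminf hbound
    _ = _ := (((ENNReal.continuous_rpow_const.tendsto _).comp hlim).liminf_eq)

theorem statement3_general {X : Type u} [MetricSpace X] [MeasurableSpace X] [BorelSpace X]
    [MeasurableSpace (Completion X)] [BorelSpace (Completion X)]
    (μ : Measure X) (hμ : BallCond μ)
    (q p CPI lam : ℝ) (hq : 1 ≤ q) (hp : 1 ≤ p) (hCPI : 0 < CPI) (hlam : 1 ≤ lam)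
    (x₀ : X) (r₀ : ℝ)
    (h : PoincareWithin μ q p CPI lam x₀ r₀) :
    PoincareWithin (μ.map ((↑) : X → Completion X)) q p CPI lam
      (x₀ : Completion X) r₀ := by
  have hι : Isometry ((↑) : X → Completion X) := Completion.coe_isometry
  have hιm : Measurable ((↑) : X → Completion X) := (Completion.continuous_coe X).measurable
  intro x r hr hsub
  obtain ⟨xs, hxs⟩ := Completion.denseRange_coe.exists_seq_tendsto x
  refine poincareAt_of_tendsto (hμ.map_isometry_of_denseRange hι hιm Completion.denseRange_coe)
    (by linarith) (by linarith) hCPI hlam hr hxs ?_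
  filter_upwards [(tendsto_iff_dist_tendsto_zero.1 hxs).eventually (gt_mem_nhds hr)] with n hn
  have hball : Metric.ball (xs n) (r - dist (xs n : Completion X) x) ⊆ Metric.ball x₀ r₀ := by
    rw [← hι.preimage_ball, ← hι.preimage_ball]
    exact preimage_mono ((ball_subset_ball' (by simp)).trans hsub)
  exact PoincareAt.map_isometry hι hιm hlam (sub_pos.2 hn) (h (xs n) _ (sub_pos.2 hn) hball)

/-- If `X` supports a `(q,p)`-Poincaré inequality within the ball
`B(x₀,r₀)`, with constants `C_PI` and `λ`, then the completion `X̂` supports a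
`(q,p)`-Poincaré inequality within the ball `B̂(x₀,r₀)`, with the same constants. -/
theorem statement3 {X : Type u} [MetricSpace X] [MeasurableSpace X] [BorelSpace X]
    [MeasurableSpace (Completion X)] [BorelSpace (Completion X)]
    (μ : Measure X) (hμ : BallCond μ)
    (q p CPI lam : ℝ) (hq : 1 ≤ q) (hp : 1 ≤ p) (hCPI : 0 < CPI) (hlam : 1 ≤ lam)
    (x₀ : X) (r₀ : ℝ) (hr₀ : 0 < r₀)
    (h : PoincareWithin μ q p CPI lam x₀ r₀) :
    PoincareWithin (μ.map ((↑) : X → Completion X)) q p CPI lam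
      (x₀ : Completion X) r₀ :=
  statement3_general μ hμ q p CPI lam hq hp hCPI hlam x₀ r₀ h

end Paper
end
end
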